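/- Define operators on the Fock space G₀ = Σ_{i>0}a_{-i}a_i and G₁(t₁,t₂) = (1/2)Σ_{i,j>0}(t₁t₂ a_{-i}a_{-j}a_{i+j} − a_{-i-j}a_i a_j) − (t₁+t₂)Σ_{i>0}((i−1)/2)a_{-i}a_i. Then for n > 0, the first derivative a_{-n}' := [G₁(t₁,t₂), a_{-n}] is given by the formula a_m' = (m/2)Σ_{i+j=m}(−t₁t₂)^{ε(i,j)} a_i a_j + (m(|m|−1)/2)(t₁+t₂)a_m with m = −n, where ε(i,j) = 1 if (ij<0 and i+j>0) or (i,j<0), and ε(i,j) = 0 otherwise. -/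

import Mathlib

open MvPolynomial Finset

noncomputable section

/-- The Fock space, modeled as the ring of symmetric functions: polynomials in the
power sums `p₁, p₂, …`, with variable `X k` representing `p_{k+1}`. -/
abbrev Fock (F : Type*) [Field F] : Type _ := MvPolynomial ℕ F

/-- The creation (Heisenberg) operator `a₋ₖ` (for `k ≥ 1`): multiplication by `p_k`. -/
def crea (F : Type*) [Field F] (k : ℕ) : Module.End F (Fock F) :=
  LinearMap.mulLeft F (MvPolynomial.X (k - 1))

/-- The annihilation (Heisenberg) operator `aₖ` (for `k ≥ 1`): `k·∂/∂p_k`.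
These satisfy the Heisenberg relations `[aₖ, a_ℓ] = k δ_{k,−ℓ}·Id`. -/
def ann (F : Type*) [Field F] (k : ℕ) : Module.End F (Fock F) :=
  (k : F) • (MvPolynomial.pderiv (k - 1)).toLinearMap

variable {F : Type*} [Field F]

/-- The equivariant boundary operator
`G₁(t₁,t₂) = (1/2)∑_{i,j>0}(t₁t₂ a₋ᵢa₋ⱼa_{i+j} − a₋ᵢ₋ⱼaᵢaⱼ) − (t₁+t₂)∑_{i>0}((i−1)/2)a₋ᵢaᵢ`,
given by its (locally finite) action on a vector `v`; the infinite sums are `finsum`s,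
which have finite support on each fixed `v`.  (Indices are shifted: the pair `p : ℕ × ℕ`
stands for `(i, j) = (p.1 + 1, p.2 + 1)`, and `i` stands for the part `i + 1`.) -/
def G1 (t₁ t₂ : F) (v : Fock F) : Fock F :=
  ((1 : F) / 2) •
      (∑ᶠ p : ℕ × ℕ,
        ((t₁ * t₂) • crea F (p.1 + 1) (crea F (p.2 + 1) (ann F (p.1 + p.2 + 2) v))
          - crea F (p.1 + p.2 + 2) (ann F (p.1 + 1) (ann F (p.2 + 1) v))))
    - (t₁ + t₂) • ∑ᶠ i : ℕ, (((i : F)) / 2) • crea F (i + 1) (ann F (i + 1) v)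

/-- `ε(i,j) = 1` if (`ij < 0` and `i + j > 0`) or (`i < 0` and `j < 0`), else `0`. -/
def eps (i j : ℤ) : ℕ := if (i * j < 0 ∧ 0 < i + j) ∨ (i < 0 ∧ j < 0) then 1 else 0

lemma ann_crea (k m : ℕ) (hk : 0 < k) (hm : 0 < m) (v : Fock F) :
    ann F k (crea F m v) = crea F m (ann F k v) + (if k = m then (k : F) • v else 0) := by
  classical
  have hkm : (k - 1 = m - 1) ↔ k = m := by omega
  simp only [ann, crea, LinearMap.smul_apply, LinearMap.mulLeft_apply]
  rw [show ((pderiv (k-1)).toLinearMap : Fock F →ₗ[F] Fock F) (X (m-1) * v) = pderiv (k-1) (X (m-1) * v) from rfl]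
  rw [pderiv_mul, pderiv_X]
  by_cases h : k = m
  · subst h
    simp [Pi.single_apply, smul_add, mul_comm]
    exact add_comm _ _
  · have : (k - 1 : ℕ) ≠ m - 1 := fun hc => h (hkm.mp hc)
    simp [Pi.single_apply, this, h]

lemma pderiv_pderiv (i j : ℕ) (f : MvPolynomial ℕ F) :
    pderiv i (pderiv j f) = pderiv j (pderiv i f) := by
  classical
  induction f using MvPolynomial.induction_on with
  | C a => simp
  | add p q hp hq => simp [hp, hq]
  | mul_X p s hp =>
      simp only [pderiv_mul, pderiv_X, map_add, hp, Pi.single_apply]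
      split_ifs <;> simp <;> ring

lemma crea_comm (i j : ℕ) (v : Fock F) : crea F i (crea F j v) = crea F j (crea F i v) := by
  simp [crea, mul_left_comm]

lemma summand_split (t₁ t₂ : F) (n : ℕ) (hn : 0 < n) (v : Fock F) (p q : ℕ) :
    (t₁ * t₂) • crea F (p + 1) (crea F (q + 1) (ann F (p + q + 2) (crea F n v)))
      - crea F (p + q + 2) (ann F (p + 1) (ann F (q + 1) (crea F n v)))
    = crea F n ((t₁ * t₂) • crea F (p + 1) (crea F (q + 1) (ann F (p + q + 2) v))
        - crea F (p + q + 2) (ann F (p + 1) (ann F (q + 1) v)))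
      + (t₁ * t₂) • (if p + q + 2 = n then (n : F) • crea F (p + 1) (crea F (q + 1) v) else 0)
      - (if p + 1 = n then (n : F) • crea F (p + q + 2) (ann F (q + 1) v) else 0)
      - (if q + 1 = n then (n : F) • crea F (p + q + 2) (ann F (p + 1) v) else 0) := by
  classical
  rw [ann_crea (p + q + 2) n (by omega) hn, ann_crea (q + 1) n (by omega) hn]
  rw [map_add (ann F (p + 1)), ann_crea (p + 1) n (by omega) hn]
  split_ifs <;> try omega
  all_goals (
    subst_vars
    try first
      | (rename_i hq; have hqp : q = p := by omega
         subst hqp)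
    simp only [map_smul, map_zero, smul_zero, mul_zero, add_zero, sub_zero, map_add]
    simp only [crea, LinearMap.mulLeft_apply, smul_eq_C_mul]
    push_cast
    ring)

section
variable {N : ℕ} {w : Fock F} (hw : ∀ d, N ≤ d → pderiv d w = 0)
include hw

lemma ann_zero' (k : ℕ) (hk : N + 1 ≤ k) : ann F k w = 0 := by
  have : pderiv (k - 1) w = 0 := hw (k - 1) (by omega)
  simp [ann, this]

lemma ann_ann_zero (p q : ℕ) (hp : N ≤ p) : ann F (p + 1) (ann F (q + 1) w) = 0 := by
  have h1 : pderiv p (pderiv q w) = 0 := by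
    rw [pderiv_pderiv]
    rw [hw p hp, map_zero]
  simp [ann, map_smul, h1]

lemma G1_apply_eq (t₁ t₂ : F) :
    G1 t₁ t₂ w = ((1 : F) / 2) •
      (∑ p ∈ range N ×ˢ range N,
        ((t₁ * t₂) • crea F (p.1 + 1) (crea F (p.2 + 1) (ann F (p.1 + p.2 + 2) w))
          - crea F (p.1 + p.2 + 2) (ann F (p.1 + 1) (ann F (p.2 + 1) w))))
    - (t₁ + t₂) • ∑ i ∈ range N, (((i : F)) / 2) • crea F (i + 1) (ann F (i + 1) w) := by
  unfold G1
  rw [finsum_eq_sum_of_support_subset _ (s := range N ×ˢ range N) ?h1,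
      finsum_eq_sum_of_support_subset _ (s := range N) ?h2]
  case h1 =>
    intro p hp
    by_contra hmem
    simp only [Finset.coe_product, Set.mem_prod, Finset.mem_coe, mem_range, not_and_or,
      not_lt] at hmem
    apply hp
    rcases hmem with h | h
    · simp [ann_zero' hw (p.1 + p.2 + 2) (by omega), ann_ann_zero hw p.1 p.2 h]
    · simp [ann_zero' hw (p.2 + 1) (by omega), ann_zero' hw (p.1 + p.2 + 2) (by omega)]
  case h2 =>
    intro i hi
    by_contra hmem
    simp only [Finset.mem_coe, mem_range, not_lt] at hmem
    exact hi (by simp [ann_zero' hw (i + 1) (by omega)])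

end

lemma sum_delta_fst {N n : ℕ} (hn : 0 < n) (hnN : n ≤ N) (g : ℕ → ℕ → Fock F) :
    ∑ p ∈ range N ×ˢ range N, (if p.1 + 1 = n then g p.1 p.2 else 0)
      = ∑ y ∈ range N, g (n - 1) y := by
  rw [Finset.sum_product]
  have : ∀ x ∈ range N, (∑ y ∈ range N, if x + 1 = n then g x y else 0)
      = if x = n - 1 then ∑ y ∈ range N, g x y else 0 := by
    intro x _
    by_cases h : x + 1 = n
    · have h' : x = n - 1 := by omega
      simp [h, h', show n - 1 + 1 = n by omega]
    · have h' : x ≠ n - 1 := by omega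
      simp [h, h']
  rw [Finset.sum_congr rfl this, Finset.sum_ite_eq' (range N) (n - 1)]
  simp only [mem_range, if_pos (by omega : n - 1 < N)]

lemma sum_delta_snd {N n : ℕ} (hn : 0 < n) (hnN : n ≤ N) (g : ℕ → ℕ → Fock F) :
    ∑ p ∈ range N ×ˢ range N, (if p.2 + 1 = n then g p.1 p.2 else 0)
      = ∑ x ∈ range N, g x (n - 1) := by
  rw [Finset.sum_product]
  refine Finset.sum_congr rfl fun x _ => ?_
  have : ∀ y, (if y + 1 = n then g x y else 0) = (if y = n - 1 then g x y else 0) := by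
    intro y
    by_cases h : y + 1 = n
    · have h' : y = n - 1 := by omega
      simp [h, h', show n - 1 + 1 = n by omega]
    · have h' : y ≠ n - 1 := by omega
      simp [h, h']
  rw [Finset.sum_congr rfl fun y _ => this y, Finset.sum_ite_eq' (range N) (n - 1)]
  simp only [mem_range, if_pos (by omega : n - 1 < N)]

lemma sum_delta_diag {N n : ℕ} (hn : 0 < n) (hnN : n ≤ N) (g : ℕ → ℕ → Fock F) :
    ∑ p ∈ range N ×ˢ range N, (if p.1 + p.2 + 2 = n then g p.1 p.2 else 0)
      = ∑ k ∈ Ioo 0 n, g (k - 1) (n - k - 1) := by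
  rw [← Finset.sum_filter]
  refine Finset.sum_bij' (fun p _ => p.1 + 1) (fun k _ => (k - 1, n - k - 1)) ?_ ?_ ?_ ?_ ?_
  · rintro ⟨x, y⟩ hx
    simp only [Finset.mem_filter, Finset.mem_product, mem_range] at hx
    simp only [mem_Ioo]
    omega
  · intro k hk
    simp only [mem_Ioo] at hk
    simp only [Finset.mem_filter, Finset.mem_product, mem_range]
    omega
  · rintro ⟨x, y⟩ hx
    simp only [Finset.mem_filter, Finset.mem_product, mem_range] at hx
    simp only [Prod.mk.injEq]
    omega
  · intro k hk
    simp only [mem_Ioo] at hk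
    dsimp only
    omega
  · rintro ⟨x, y⟩ hx
    simp only [Finset.mem_filter, Finset.mem_product, mem_range] at hx
    simp only
    congr 1 <;> omega

lemma eps1 (n p : ℕ) (hn : 0 < n) :
    eps ((p + 1 : ℕ) : ℤ) (-((n + p + 1 : ℕ) : ℤ)) = 0 := by
  unfold eps
  rw [if_neg]
  rintro (⟨h1, h2⟩ | ⟨h1, h2⟩) <;> push_cast at h1 h2 <;> omega

lemma eps2 (n p : ℕ) (hn : 0 < n) :
    eps (-((n + p + 1 : ℕ) : ℤ)) ((p + 1 : ℕ) : ℤ) = 0 := by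
  unfold eps
  rw [if_neg]
  rintro (⟨h1, h2⟩ | ⟨h1, h2⟩) <;> push_cast at h1 h2 <;> omega

lemma eps3 (n k : ℕ) (h0 : 0 < k) (hkn : k < n) :
    eps (-(k : ℤ)) (-((n - k : ℕ) : ℤ)) = 1 := by
  unfold eps
  rw [if_pos]
  right
  constructor <;> omega

lemma single_split (t : F) (n : ℕ) (hn : 0 < n) (v : Fock F) (i : ℕ) :
    t • crea F (i + 1) (ann F (i + 1) (crea F n v))
      = crea F n (t • crea F (i + 1) (ann F (i + 1) v))
        + (if i + 1 = n then (t * (n : F)) • crea F (i + 1) v else 0) := by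
  rw [ann_crea (i + 1) n (by omega) hn]
  split_ifs with h
  · subst h
    simp only [map_add, map_smul, smul_add, crea, LinearMap.mulLeft_apply, smul_eq_C_mul, C_mul]
    ring
  · simp only [add_zero, map_add, map_zero, smul_add, smul_zero, crea,
      LinearMap.mulLeft_apply, smul_eq_C_mul]
    ring

lemma sum_delta_one {N n : ℕ} (hn : 0 < n) (hnN : n ≤ N) (g : ℕ → Fock F) :
    ∑ i ∈ range N, (if i + 1 = n then g i else 0) = g (n - 1) := by
  have : ∀ i, (if i + 1 = n then g i else 0) = (if i = n - 1 then g i else 0) := by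
    intro i
    by_cases h : i + 1 = n
    · have h' : i = n - 1 := by omega
      simp [h, h', show n - 1 + 1 = n by omega]
    · have h' : i ≠ n - 1 := by omega
      simp [h, h']
  rw [Finset.sum_congr rfl fun i _ => this i, Finset.sum_ite_eq' (range N) (n - 1)]
  simp only [mem_range, if_pos (by omega : n - 1 < N)]

section
variable {N n : ℕ} {v : Fock F} (hv : ∀ d, N ≤ d → pderiv d v = 0) (hn : 0 < n)
include hv hn

lemma rhs1_eq (t₁ t₂ : F) :
    (∑ᶠ p : ℕ, (-(t₁ * t₂)) ^ (eps ((p + 1 : ℕ) : ℤ) (-((n + p + 1 : ℕ) : ℤ))) •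
        ann F (p + 1) (crea F (n + p + 1) v))
      = ∑ p ∈ range N, crea F (n + p + 1) (ann F (p + 1) v) := by
  have hpt : ∀ p : ℕ, (-(t₁ * t₂)) ^ (eps ((p + 1 : ℕ) : ℤ) (-((n + p + 1 : ℕ) : ℤ))) •
      ann F (p + 1) (crea F (n + p + 1) v) = crea F (n + p + 1) (ann F (p + 1) v) := by
    intro p
    rw [eps1 n p hn, pow_zero, one_smul,
      ann_crea (p + 1) (n + p + 1) (by omega) (by omega), if_neg (by omega), add_zero]
  rw [finsum_congr hpt]
  refine finsum_eq_sum_of_support_subset _ fun p hp => ?_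
  simp only [Finset.mem_coe, mem_range]
  by_contra hmem
  exact hp (by simp only []; rw [ann_zero' hv (p + 1) (by omega), map_zero])

lemma rhs2_eq (t₁ t₂ : F) :
    (∑ᶠ p : ℕ, (-(t₁ * t₂)) ^ (eps (-((n + p + 1 : ℕ) : ℤ)) ((p + 1 : ℕ) : ℤ)) •
        crea F (n + p + 1) (ann F (p + 1) v))
      = ∑ p ∈ range N, crea F (n + p + 1) (ann F (p + 1) v) := by
  have hpt : ∀ p : ℕ, (-(t₁ * t₂)) ^ (eps (-((n + p + 1 : ℕ) : ℤ)) ((p + 1 : ℕ) : ℤ)) •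
      crea F (n + p + 1) (ann F (p + 1) v) = crea F (n + p + 1) (ann F (p + 1) v) := by
    intro p
    rw [eps2 n p hn, pow_zero, one_smul]
  rw [finsum_congr hpt]
  refine finsum_eq_sum_of_support_subset _ fun p hp => ?_
  simp only [Finset.mem_coe, mem_range]
  by_contra hmem
  exact hp (by simp only []; rw [ann_zero' hv (p + 1) (by omega), map_zero])

end


/-- For `n > 0`, the first derivative
`a₋ₙ' = [G₁(t₁,t₂), a₋ₙ]` is given by the formula
`a_m' = (m/2)·∑_{i+j=m} (−t₁t₂)^{ε(i,j)} aᵢaⱼ + (m(|m|−1)/2)(t₁+t₂)·a_m` with `m = −n`: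
the ordered pairs `(i,j)` of nonzero integers with `i + j = −n` are
`(−k, −(n−k))` for `0 < k < n` (with `ε = 1`), `(p, −(n+p))` and `(−(n+p), p)` for
`p > 0` (with `ε = 0`).  The sums over `p > 0` are `finsum`s (locally finite). -/
theorem first_derivative_creation [CharZero F] (t₁ t₂ : F) (n : ℕ) (hn : 0 < n)
    (v : Fock F) :
    G1 t₁ t₂ (crea F n v) - crea F n (G1 t₁ t₂ v)
      = ((-(n : F)) / 2) •
          ((∑ k ∈ Finset.Ioo 0 n,
              (-(t₁ * t₂)) ^ (eps (-(k : ℤ)) (-((n - k : ℕ) : ℤ))) •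
                crea F k (crea F (n - k) v))
            + (∑ᶠ p : ℕ, (-(t₁ * t₂)) ^ (eps ((p + 1 : ℕ) : ℤ) (-((n + p + 1 : ℕ) : ℤ))) •
                ann F (p + 1) (crea F (n + p + 1) v))
            + (∑ᶠ p : ℕ, (-(t₁ * t₂)) ^ (eps (-((n + p + 1 : ℕ) : ℤ)) ((p + 1 : ℕ) : ℤ)) •
                crea F (n + p + 1) (ann F (p + 1) v)))
        + ((-(n : F)) * ((n : F) - 1) / 2 * (t₁ + t₂)) • crea F n v := by
  classical
  set N := max n (v.vars.sup id + 1) with hNdef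
  have hnN : n ≤ N := le_max_left _ _
  have hv : ∀ d, N ≤ d → pderiv d v = 0 := by
    intro d hd
    apply pderiv_eq_zero_of_notMem_vars
    intro hmem
    have := Finset.le_sup (f := id) hmem
    simp only [id] at this
    omega
  have hcv : ∀ d, N ≤ d → pderiv d (crea F n v) = 0 := by
    intro d hd
    have h1 : pderiv d (X (n - 1) : Fock F) = 0 := pderiv_X_of_ne (by omega)
    simp only [crea, LinearMap.mulLeft_apply, pderiv_mul, h1, zero_mul, hv d hd,
      mul_zero, add_zero, zero_add]
  rw [G1_apply_eq hcv t₁ t₂, G1_apply_eq hv t₁ t₂, rhs1_eq hv hn t₁ t₂, rhs2_eq hv hn t₁ t₂]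
  rw [Finset.sum_congr rfl fun (p : ℕ × ℕ) _ => summand_split t₁ t₂ n hn v p.1 p.2]
  rw [Finset.sum_congr rfl fun (i : ℕ) _ => single_split ((i : F) / 2) n hn v i]
  rw [Finset.sum_sub_distrib, Finset.sum_sub_distrib, Finset.sum_add_distrib,
    Finset.sum_add_distrib]
  rw [← map_sum (crea F n), ← map_sum (crea F n)]
  simp only [smul_ite, smul_zero]
  rw [sum_delta_diag hn hnN (fun a b => (t₁ * t₂) • ((n : F) • crea F (a + 1) (crea F (b + 1) v))),
    sum_delta_fst hn hnN (fun a b => (n : F) • crea F (a + b + 2) (ann F (b + 1) v)),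
    sum_delta_snd hn hnN (fun a b => (n : F) • crea F (a + b + 2) (ann F (a + 1) v)),
    sum_delta_one hn hnN (fun i => (((i : F) / 2) * (n : F)) • crea F (i + 1) v)]
  rw [map_sub (crea F n), map_smul (crea F n), map_smul (crea F n)]
  have e1 : ∑ k ∈ Ioo 0 n, (t₁ * t₂) • ((n : F) • crea F (k - 1 + 1) (crea F (n - k - 1 + 1) v))
      = (t₁ * t₂ * (n : F)) • ∑ k ∈ Ioo 0 n, crea F k (crea F (n - k) v) := by
    rw [Finset.smul_sum]
    refine Finset.sum_congr rfl fun k hk => ?_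
    simp only [mem_Ioo] at hk
    rw [show k - 1 + 1 = k by omega, show n - k - 1 + 1 = n - k by omega, smul_smul]
  have e2 : ∑ y ∈ range N, (n : F) • crea F (n - 1 + y + 2) (ann F (y + 1) v)
      = (n : F) • ∑ p ∈ range N, crea F (n + p + 1) (ann F (p + 1) v) := by
    rw [Finset.smul_sum]
    exact Finset.sum_congr rfl fun y _ => by rw [show n - 1 + y + 2 = n + y + 1 by omega]
  have e3 : ∑ x ∈ range N, (n : F) • crea F (x + (n - 1) + 2) (ann F (x + 1) v)
      = (n : F) • ∑ p ∈ range N, crea F (n + p + 1) (ann F (p + 1) v) := by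
    rw [Finset.smul_sum]
    exact Finset.sum_congr rfl fun x _ => by rw [show x + (n - 1) + 2 = n + x + 1 by omega]
  have e4 : (((n - 1 : ℕ) : F) / 2 * (n : F)) • crea F (n - 1 + 1) v
      = (((n : F) - 1) / 2 * (n : F)) • crea F n v := by
    rw [Nat.cast_pred hn, show n - 1 + 1 = n by omega]
  have e5 : ∑ k ∈ Ioo 0 n, (-(t₁ * t₂)) ^ (eps (-(k : ℤ)) (-((n - k : ℕ) : ℤ))) •
        crea F k (crea F (n - k) v)
      = (-(t₁ * t₂)) • ∑ k ∈ Ioo 0 n, crea F k (crea F (n - k) v) := by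
    rw [Finset.smul_sum]
    refine Finset.sum_congr rfl fun k hk => ?_
    simp only [mem_Ioo] at hk
    rw [eps3 n k hk.1 hk.2, pow_one]
  rw [e1, e2, e3, e4, e5]
  module


end
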